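/- For n ≥ 2, F(A_{n+1}, f_{2n} − f_{2n−3}) = F(A, f_{2n} − f_{2n−3}); that is, the set of sub-words of length f_{2n} − f_{2n−3} of words in A_{n+1} already equals the union over all k of the sets of sub-words of that length of words in A_k. -/
import Mathlib


/-- The two-letter alphabet. -/
inductive Letter : Type
  | a : Letter
  | b : Letter
deriving DecidableEq

/-- A word is a finite sequence of letters. -/
abbrev Word := List Letter

/-- Concatenation set `UV = {uv : u ∈ U, v ∈ V}`. -/
def concatSet (U V : Set Word) : Set Word := {w | ∃ u ∈ U, ∃ v ∈ V, w = u ++ v}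

mutual
  /-- The sets `A_n` of inflated words (indexed so that `Aset 1 = {a}`). -/
  def Aset : ℕ → Set Word
    | 0 => ∅
    | 1 => {[Letter.a]}
    | n + 2 => concatSet (Bset (n + 1)) (concatSet (Aset (n + 1)) (Aset (n + 1)))
  /-- The sets `B_n` of inflated words (indexed so that `Bset 1 = {b}`). -/
  def Bset : ℕ → Set Word
    | 0 => ∅
    | 1 => {[Letter.b]}
    | n + 2 => concatSet (Aset (n + 1)) (Bset (n + 1)) ∪ concatSet (Bset (n + 1)) (Aset (n + 1))
end

/-- The sub-word `w[a,b] = w_a w_{a+1} … w_b` (1-indexed). -/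
def wordSlice (w : Word) (i j : ℕ) : Word := (w.drop (i - 1)).take (j - i + 1)

/-- `W[a,b] = {w[a,b] : w ∈ W}`. -/
def setSlice (W : Set Word) (i j : ℕ) : Set Word := {x | ∃ w ∈ W, x = wordSlice w i j}

/-- `x` is a sub-word (contiguous factor) of `w`. -/
def IsFactor (x w : Word) : Prop := ∃ u v : Word, w = u ++ x ++ v

/-- `F(S, m)`: the set of all sub-words of length `m` of words in `S`. -/
def FactorSet (S : Set Word) (m : ℕ) : Set Word :=
  {x | x.length = m ∧ ∃ w ∈ S, IsFactor x w}

/-- `F(A, m) = ⋃_{n ≥ 1} F(A_n, m)`. -/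
def FA (m : ℕ) : Set Word := ⋃ n ∈ {n : ℕ | 1 ≤ n}, FactorSet (Aset n) m

/-- `F(B, m) = ⋃_{n ≥ 1} F(B_n, m)`. -/
def FB (m : ℕ) : Set Word := ⋃ n ∈ {n : ℕ | 1 ≤ n}, FactorSet (Bset n) m

/-- The golden mean `τ = (1 + √5)/2`. -/
noncomputable def tau : ℝ := (1 + Real.sqrt 5) / 2


set_option linter.unusedVariables false

namespace FibProof
open Letter List

/-! ### Basic membership constructors and structure lemmas -/

lemma memA_intro {n : ℕ} {b x y : Word} (hb : b ∈ Bset (n+1)) (hx : x ∈ Aset (n+1))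
    (hy : y ∈ Aset (n+1)) : b ++ (x ++ y) ∈ Aset (n+2) :=
  ⟨b, hb, x ++ y, ⟨x, hx, y, hy, rfl⟩, rfl⟩

lemma memB_ab {n : ℕ} {x b : Word} (hx : x ∈ Aset (n+1)) (hb : b ∈ Bset (n+1)) :
    x ++ b ∈ Bset (n+2) := Or.inl ⟨x, hx, b, hb, rfl⟩

lemma memB_ba {n : ℕ} {b x : Word} (hb : b ∈ Bset (n+1)) (hx : x ∈ Aset (n+1)) :
    b ++ x ∈ Bset (n+2) := Or.inr ⟨b, hb, x, hx, rfl⟩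

lemma memA_elim {n : ℕ} {w : Word} (hw : w ∈ Aset (n+2)) :
    ∃ b ∈ Bset (n+1), ∃ x ∈ Aset (n+1), ∃ y ∈ Aset (n+1), w = b ++ (x ++ y) := by
  obtain ⟨b, hb, v, ⟨x, hx, y, hy, rfl⟩, rfl⟩ := hw
  exact ⟨b, hb, x, hx, y, hy, rfl⟩

lemma memB_elim {n : ℕ} {w : Word} (hw : w ∈ Bset (n+2)) :
    (∃ x ∈ Aset (n+1), ∃ b ∈ Bset (n+1), w = x ++ b) ∨
    (∃ b ∈ Bset (n+1), ∃ x ∈ Aset (n+1), w = b ++ x) := by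
  rcases hw with ⟨x, hx, b, hb, rfl⟩ | ⟨b, hb, x, hx, rfl⟩
  · exact Or.inl ⟨x, hx, b, hb, rfl⟩
  · exact Or.inr ⟨b, hb, x, hx, rfl⟩

/-! ### Lengths -/

lemma length_AB : ∀ n : ℕ, (∀ w ∈ Aset (n+1), w.length = Nat.fib (2*n+2)) ∧
    (∀ w ∈ Bset (n+1), w.length = Nat.fib (2*n+1)) := by
  intro n
  induction n with
  | zero =>
    constructor
    · rintro w rfl; rfl
    · rintro w rfl; rfl
  | succ k ih =>
    obtain ⟨ihA, ihB⟩ := ih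
    constructor
    · intro w hw
      obtain ⟨b, hb, x, hx, y, hy, rfl⟩ := memA_elim hw
      simp only [List.length_append, ihA x hx, ihA y hy, ihB b hb]
      have e1 : Nat.fib (2*k+2+2) = Nat.fib (2*k+2) + Nat.fib (2*k+2+1) := Nat.fib_add_two
      have e2 : Nat.fib (2*k+1+2) = Nat.fib (2*k+1) + Nat.fib (2*k+1+1) := Nat.fib_add_two
      have g1 : 2*(k+1)+2 = 2*k+2+2 := by omega
      have g2 : 2*k+2+1 = 2*k+1+2 := by omega
      have g3 : 2*k+1+1 = 2*k+2 := by omega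
      rw [g1] ; rw [g2] at e1; rw [g3] at e2
      omega
    · intro w hw
      rcases memB_elim hw with ⟨x, hx, b, hb, rfl⟩ | ⟨b, hb, x, hx, rfl⟩ <;>
        simp only [List.length_append, ihA x hx, ihB b hb] <;>
        · have e2 : Nat.fib (2*k+1+2) = Nat.fib (2*k+1) + Nat.fib (2*k+1+1) := Nat.fib_add_two
          have g1 : 2*(k+1)+1 = 2*k+1+2 := by omega
          have g3 : 2*k+1+1 = 2*k+2 := by omega
          rw [g1] ; rw [g3] at e2
          omega

lemma lenA {n : ℕ} {w : Word} (hw : w ∈ Aset (n+1)) : w.length = Nat.fib (2*n+2) :=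
  (length_AB n).1 w hw

lemma lenB {n : ℕ} {w : Word} (hw : w ∈ Bset (n+1)) : w.length = Nat.fib (2*n+1) :=
  (length_AB n).2 w hw

/-! ### Nonemptiness -/

lemma exist_AB : ∀ n : ℕ, (∃ w, w ∈ Aset (n+1)) ∧ (∃ w, w ∈ Bset (n+1)) := by
  intro n
  induction n with
  | zero => exact ⟨⟨[Letter.a], rfl⟩, ⟨[Letter.b], rfl⟩⟩
  | succ k ih =>
    obtain ⟨⟨x, hx⟩, ⟨b, hb⟩⟩ := ih
    exact ⟨⟨b ++ (x ++ x), memA_intro hb hx hx⟩, ⟨x ++ b, memB_ab hx hb⟩⟩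

lemma exA (n : ℕ) : ∃ w, w ∈ Aset (n+1) := (exist_AB n).1
lemma exB (n : ℕ) : ∃ w, w ∈ Bset (n+1) := (exist_AB n).2

end FibProof

namespace FibProof
open Letter List

lemma suffix_of_suffix_length_le {l₁ l₂ l₃ : Word} (h1 : l₁ <:+ l₃) (h2 : l₂ <:+ l₃)
    (h : l₁.length ≤ l₂.length) : l₁ <:+ l₂ := by
  rw [← List.reverse_prefix] at h1 h2 ⊢
  exact List.prefix_of_prefix_length_le h1 h2 (by simpa using h)

lemma prefix_split {t u v : Word} (h : t <+: u ++ v) :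
    t <+: u ∨ ∃ t', t = u ++ t' ∧ t' <+: v := by
  rcases le_or_gt t.length u.length with hle | hlt
  · exact Or.inl (List.prefix_of_prefix_length_le h (List.prefix_append u v) hle)
  · have hu : u <+: t := List.prefix_of_prefix_length_le (List.prefix_append u v) h hlt.le
    obtain ⟨t', rfl⟩ := hu
    refine Or.inr ⟨t', rfl, ?_⟩
    obtain ⟨d, hd⟩ := h
    rw [List.append_assoc] at hd
    have hv : t' ++ d = v := List.append_cancel_left hd
    exact ⟨d, hv⟩

lemma infix_split {x u v : Word} (h : x <:+: u ++ v) :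
    x <:+: u ∨ x <:+: v ∨ ∃ s t, x = s ++ t ∧ s <:+ u ∧ t <+: v ∧ s ≠ [] ∧ t ≠ [] := by
  obtain ⟨a, c, hac⟩ := h
  have hp : a ++ x <+: u ++ v := ⟨c, hac⟩
  have hxs : x <:+ a ++ x := List.suffix_append a x
  rcases prefix_split hp with hpu | ⟨t', heq, ht'⟩
  · exact Or.inl (hxs.isInfix.trans hpu.isInfix)
  · have hxs' : x <:+ u ++ t' := heq ▸ hxs
    by_cases ht0 : t' = []
    · subst ht0
      simp only [List.append_nil] at hxs'
      exact Or.inl hxs'.isInfix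
    rcases le_or_gt x.length t'.length with hle | hlt
    · have : x <:+ t' := suffix_of_suffix_length_le hxs' (List.suffix_append u t') hle
      exact Or.inr (Or.inl (this.isInfix.trans ht'.isInfix))
    · have hts : t' <:+ x := suffix_of_suffix_length_le (List.suffix_append u t') hxs' hlt.le
      obtain ⟨s, rfl⟩ := hts
      have hsu : s <:+ u := by
        obtain ⟨w, hw⟩ := hxs'
        rw [← List.append_assoc] at hw
        exact ⟨w, List.append_cancel_right hw⟩
      refine Or.inr (Or.inr ⟨s, t', rfl, hsu, ht', ?_, ht0⟩)
      intro h0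
      subst h0
      simp at hlt
    
lemma straddle_pair {s t u v : Word} (hs : s <:+ u) (ht : t <+: v) : s ++ t <:+: u ++ v := by
  obtain ⟨a, rfl⟩ := hs
  obtain ⟨d, rfl⟩ := ht
  exact ⟨a, d, by simp [List.append_assoc]⟩

lemma straddle_mid {s t u v mid : Word} (hs : s <:+ u) (ht : t <+: v) :
    s ++ (mid ++ t) <:+: u ++ (mid ++ v) := by
  obtain ⟨a, rfl⟩ := hs
  obtain ⟨d, rfl⟩ := ht
  exact ⟨a, d, by simp [List.append_assoc]⟩

lemma mem_FactorSet {M : ℕ} {x c : Word} {S : Set Word} (hc : c ∈ S) (h : x <:+: c)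
    (hx : x.length = M) : x ∈ FactorSet S M := by
  obtain ⟨s, t, hst⟩ := h
  exact ⟨hx, c, hc, s, t, hst.symm⟩

/-! ### Trivial window embeddings: each block pattern occurs inside a word of `Aset (j+3)` -/

section Windows
variable {j : ℕ} {x y z w b b1 b2 : Word}

lemma inf_AA (hx : x ∈ Aset (j+1)) (hy : y ∈ Aset (j+1)) :
    ∃ c ∈ Aset (j+3), x ++ y <:+: c := by
  obtain ⟨α, hα⟩ := exA j; obtain ⟨β, hβ⟩ := exB j; obtain ⟨β₂, hβ₂⟩ := exB (j+1)
  exact ⟨β₂ ++ ((β ++ (x ++ y)) ++ (β ++ (α ++ α))),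
    memA_intro hβ₂ (memA_intro hβ hx hy) (memA_intro hβ hα hα),
    ⟨β₂ ++ β, β ++ (α ++ α), by simp [List.append_assoc]⟩⟩

lemma inf_AB (hx : x ∈ Aset (j+1)) (hb : b ∈ Bset (j+1)) :
    ∃ c ∈ Aset (j+3), x ++ b <:+: c := by
  obtain ⟨α₂, hα₂⟩ := exA (j+1)
  exact ⟨(x ++ b) ++ (α₂ ++ α₂), ⟨x ++ b, memB_ab hx hb, α₂ ++ α₂, ⟨α₂, hα₂, α₂, hα₂, rfl⟩, rfl⟩,
    ⟨[], α₂ ++ α₂, by simp [List.append_assoc]⟩⟩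

lemma inf_BA (hb : b ∈ Bset (j+1)) (hx : x ∈ Aset (j+1)) :
    ∃ c ∈ Aset (j+3), b ++ x <:+: c := by
  obtain ⟨α, hα⟩ := exA j; obtain ⟨α₂, hα₂⟩ := exA (j+1); obtain ⟨β₂, hβ₂⟩ := exB (j+1)
  exact ⟨β₂ ++ ((b ++ (x ++ α)) ++ α₂), memA_intro hβ₂ (memA_intro hb hx hα) hα₂,
    ⟨β₂, α ++ α₂, by simp [List.append_assoc]⟩⟩

lemma inf_BB (hb1 : b1 ∈ Bset (j+1)) (hb2 : b2 ∈ Bset (j+1)) :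
    ∃ c ∈ Aset (j+3), b1 ++ b2 <:+: c := by
  obtain ⟨α, hα⟩ := exA j; obtain ⟨α₂, hα₂⟩ := exA (j+1)
  exact ⟨(α ++ b1) ++ ((b2 ++ (α ++ α)) ++ α₂),
    memA_intro (memB_ab hα hb1) (memA_intro hb2 hα hα) hα₂,
    ⟨α, (α ++ α) ++ α₂, by simp [List.append_assoc]⟩⟩

lemma inf_BAA (hb : b ∈ Bset (j+1)) (hx : x ∈ Aset (j+1)) (hy : y ∈ Aset (j+1)) :
    ∃ c ∈ Aset (j+3), b ++ (x ++ y) <:+: c := by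
  obtain ⟨α₂, hα₂⟩ := exA (j+1); obtain ⟨β₂, hβ₂⟩ := exB (j+1)
  exact ⟨β₂ ++ ((b ++ (x ++ y)) ++ α₂), memA_intro hβ₂ (memA_intro hb hx hy) hα₂,
    ⟨β₂, α₂, by simp [List.append_assoc]⟩⟩

lemma inf_AAB (hx : x ∈ Aset (j+1)) (hy : y ∈ Aset (j+1)) (hb : b ∈ Bset (j+1)) :
    ∃ c ∈ Aset (j+3), x ++ (y ++ b) <:+: c := by
  obtain ⟨α, hα⟩ := exA j; obtain ⟨β, hβ⟩ := exB j; obtain ⟨β₂, hβ₂⟩ := exB (j+1)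
  exact ⟨β₂ ++ ((β ++ (x ++ y)) ++ (b ++ (α ++ α))),
    memA_intro hβ₂ (memA_intro hβ hx hy) (memA_intro hb hα hα),
    ⟨β₂ ++ β, α ++ α, by simp [List.append_assoc]⟩⟩

lemma inf_AABA (hx : x ∈ Aset (j+1)) (hy : y ∈ Aset (j+1)) (hb : b ∈ Bset (j+1))
    (hz : z ∈ Aset (j+1)) : ∃ c ∈ Aset (j+3), x ++ (y ++ (b ++ z)) <:+: c := by
  obtain ⟨α, hα⟩ := exA j; obtain ⟨β, hβ⟩ := exB j; obtain ⟨β₂, hβ₂⟩ := exB (j+1)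
  exact ⟨β₂ ++ ((β ++ (x ++ y)) ++ (b ++ (z ++ α))),
    memA_intro hβ₂ (memA_intro hβ hx hy) (memA_intro hb hz hα),
    ⟨β₂ ++ β, α, by simp [List.append_assoc]⟩⟩

lemma inf_ABA (hx : x ∈ Aset (j+1)) (hb : b ∈ Bset (j+1)) (hz : z ∈ Aset (j+1)) :
    ∃ c ∈ Aset (j+3), x ++ (b ++ z) <:+: c := by
  obtain ⟨α, hα⟩ := exA j; obtain ⟨β, hβ⟩ := exB j; obtain ⟨α₂, hα₂⟩ := exA (j+1)
  exact ⟨(β ++ x) ++ ((b ++ (z ++ α)) ++ α₂),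
    memA_intro (memB_ba hβ hx) (memA_intro hb hz hα) hα₂,
    ⟨β, α ++ α₂, by simp [List.append_assoc]⟩⟩

lemma inf_ABAA (hx : x ∈ Aset (j+1)) (hb : b ∈ Bset (j+1)) (hz : z ∈ Aset (j+1))
    (hw : w ∈ Aset (j+1)) : ∃ c ∈ Aset (j+3), x ++ (b ++ (z ++ w)) <:+: c := by
  obtain ⟨β, hβ⟩ := exB j; obtain ⟨α₂, hα₂⟩ := exA (j+1)
  exact ⟨(β ++ x) ++ ((b ++ (z ++ w)) ++ α₂),
    memA_intro (memB_ba hβ hx) (memA_intro hb hz hw) hα₂,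
    ⟨β, α₂, by simp [List.append_assoc]⟩⟩

lemma inf_ABB (hx : x ∈ Aset (j+1)) (hb1 : b1 ∈ Bset (j+1)) (hb2 : b2 ∈ Bset (j+1)) :
    ∃ c ∈ Aset (j+3), x ++ (b1 ++ b2) <:+: c := by
  obtain ⟨α, hα⟩ := exA j; obtain ⟨α₂, hα₂⟩ := exA (j+1)
  exact ⟨(x ++ b1) ++ ((b2 ++ (α ++ α)) ++ α₂),
    memA_intro (memB_ab hx hb1) (memA_intro hb2 hα hα) hα₂,
    ⟨[], (α ++ α) ++ α₂, by simp [List.append_assoc]⟩⟩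

lemma inf_ABBA (hx : x ∈ Aset (j+1)) (hb1 : b1 ∈ Bset (j+1)) (hb2 : b2 ∈ Bset (j+1))
    (hz : z ∈ Aset (j+1)) : ∃ c ∈ Aset (j+3), x ++ (b1 ++ (b2 ++ z)) <:+: c := by
  obtain ⟨α, hα⟩ := exA j; obtain ⟨α₂, hα₂⟩ := exA (j+1)
  exact ⟨(x ++ b1) ++ ((b2 ++ (z ++ α)) ++ α₂),
    memA_intro (memB_ab hx hb1) (memA_intro hb2 hz hα) hα₂,
    ⟨[], α ++ α₂, by simp [List.append_assoc]⟩⟩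

lemma inf_BBA (hb1 : b1 ∈ Bset (j+1)) (hb2 : b2 ∈ Bset (j+1)) (hz : z ∈ Aset (j+1)) :
    ∃ c ∈ Aset (j+3), b1 ++ (b2 ++ z) <:+: c := by
  obtain ⟨α, hα⟩ := exA j; obtain ⟨α₂, hα₂⟩ := exA (j+1)
  exact ⟨(α ++ b1) ++ ((b2 ++ (z ++ α)) ++ α₂),
    memA_intro (memB_ab hα hb1) (memA_intro hb2 hz hα) hα₂,
    ⟨α, α ++ α₂, by simp [List.append_assoc]⟩⟩

lemma inf_BBAA (hb1 : b1 ∈ Bset (j+1)) (hb2 : b2 ∈ Bset (j+1)) (hz : z ∈ Aset (j+1))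
    (hw : w ∈ Aset (j+1)) : ∃ c ∈ Aset (j+3), b1 ++ (b2 ++ (z ++ w)) <:+: c := by
  obtain ⟨α, hα⟩ := exA j; obtain ⟨α₂, hα₂⟩ := exA (j+1)
  exact ⟨(α ++ b1) ++ ((b2 ++ (z ++ w)) ++ α₂),
    memA_intro (memB_ab hα hb1) (memA_intro hb2 hz hw) hα₂,
    ⟨α, α₂, by simp [List.append_assoc]⟩⟩

lemma inf_BAB (hb1 : b1 ∈ Bset (j+1)) (hx : x ∈ Aset (j+1)) (hb2 : b2 ∈ Bset (j+1)) :
    ∃ c ∈ Aset (j+3), b1 ++ (x ++ b2) <:+: c := by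
  obtain ⟨α, hα⟩ := exA j; obtain ⟨α₂, hα₂⟩ := exA (j+1)
  exact ⟨(b1 ++ x) ++ ((b2 ++ (α ++ α)) ++ α₂),
    memA_intro (memB_ba hb1 hx) (memA_intro hb2 hα hα) hα₂,
    ⟨[], (α ++ α) ++ α₂, by simp [List.append_assoc]⟩⟩

lemma inf_BABA (hb1 : b1 ∈ Bset (j+1)) (hx : x ∈ Aset (j+1)) (hb2 : b2 ∈ Bset (j+1))
    (hz : z ∈ Aset (j+1)) : ∃ c ∈ Aset (j+3), b1 ++ (x ++ (b2 ++ z)) <:+: c := by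
  obtain ⟨α, hα⟩ := exA j; obtain ⟨α₂, hα₂⟩ := exA (j+1)
  exact ⟨(b1 ++ x) ++ ((b2 ++ (z ++ α)) ++ α₂),
    memA_intro (memB_ba hb1 hx) (memA_intro hb2 hz hα) hα₂,
    ⟨[], α ++ α₂, by simp [List.append_assoc]⟩⟩

end Windows
end FibProof

namespace FibProof
open Letter List

lemma fib_ss (a : ℕ) : Nat.fib (a+2) = Nat.fib a + Nat.fib (a+1) := Nat.fib_add_two

lemma lenA' {i : ℕ} {w : Word} (hw : w ∈ Aset (i+2)) : w.length = Nat.fib (2*i+4) := by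
  have h := lenA hw; rwa [show 2*(i+1)+2 = 2*i+4 by ring] at h

lemma lenB' {i : ℕ} {w : Word} (hw : w ∈ Bset (i+2)) : w.length = Nat.fib (2*i+3) := by
  have h := lenB hw; rwa [show 2*(i+1)+1 = 2*i+3 by ring] at h

lemma prefix_ext {t u : Word} (v : Word) (h : t <+: u) : t <+: u ++ v :=
  h.trans (List.prefix_append u v)

lemma prefix_congr_left {t u : Word} (c : Word) (h : t <+: u) : c ++ t <+: c ++ u := by
  obtain ⟨d, rfl⟩ := h
  exact ⟨d, by simp [List.append_assoc]⟩

lemma suffix_ext {s u : Word} (c : Word) (h : s <:+ u) : s <:+ c ++ u := by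
  obtain ⟨a, rfl⟩ := h
  exact ⟨c ++ a, by simp [List.append_assoc]⟩

lemma infix_sandwich {x v : Word} (pre post : Word) (h : x <:+: v) :
    x <:+: pre ++ (v ++ post) :=
  h.trans ⟨pre, post, by simp [List.append_assoc]⟩

/-- Every short prefix of a word of `A_{i+1}` is a prefix of a word of `A_{i+2}`. -/
lemma PAA : ∀ i : ℕ, ∀ x ∈ Aset (i+1), ∀ t : Word, t <+: x →
    t.length + 1 ≤ Nat.fib (2*i+2) → ∃ w ∈ Aset (i+2), t <+: w := by
  intro i
  induction i with
  | zero =>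
    intro x hx t ht hlen
    have hf : Nat.fib 2 = 1 := rfl
    have : t.length = 0 := by
      have : Nat.fib (2*0+2) = 1 := rfl
      omega
    obtain ⟨w, hw⟩ := exA 1
    rw [List.length_eq_zero_iff] at this
    exact ⟨w, hw, by simp [this]⟩
  | succ k ih =>
    intro x hx t ht hlen
    obtain ⟨b, hb, x₁, hx₁, x₂, hx₂, rfl⟩ := memA_elim hx
    have hlb := lenB hb
    have hl1 := lenA hx₁
    have hl2 := lenA hx₂
    rw [show 2*k+1 = 2*k+1 from rfl] at hlb
    obtain ⟨α, hα⟩ := exA (k+1)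
    have e4 : Nat.fib (2*k+4) = Nat.fib (2*k+2) + Nat.fib (2*k+3) := fib_ss (2*k+2)
    have e3 : Nat.fib (2*k+3) = Nat.fib (2*k+1) + Nat.fib (2*k+2) := fib_ss (2*k+1)
    have hlen' : t.length + 1 ≤ Nat.fib (2*k+4) := by
      rwa [show 2*(k+1)+2 = 2*k+4 by ring] at hlen
    rcases prefix_split ht with htb | ⟨t₁, rfl, ht₁⟩
    · -- t <+: b
      refine ⟨(b ++ x₁) ++ (α ++ α), memA_intro (memB_ba hb hx₁) hα hα, ?_⟩
      exact prefix_ext _ (prefix_ext _ htb)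
    · rcases prefix_split ht₁ with ht₁x | ⟨t₂, rfl, ht₂⟩
      · -- t = b ++ t₁, t₁ <+: x₁
        refine ⟨(b ++ x₁) ++ (α ++ α), memA_intro (memB_ba hb hx₁) hα hα, ?_⟩
        have : b ++ t₁ <+: b ++ x₁ := prefix_congr_left b ht₁x
        exact prefix_ext _ this
      · -- t = b ++ (x₁ ++ t₂), t₂ <+: x₂
        have hlt2 : t₂.length + 1 ≤ Nat.fib (2*k+2) := by
          have := hlen'
          simp only [List.length_append] at this
          omega
        obtain ⟨w₁, hw₁, hpw₁⟩ := ih x₂ hx₂ t₂ ht₂ hlt2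
        refine ⟨(b ++ x₁) ++ (w₁ ++ α), memA_intro (memB_ba hb hx₁) hw₁ hα, ?_⟩
        have h1 : t₂ <+: w₁ ++ α := prefix_ext _ hpw₁
        have h2 : x₁ ++ t₂ <+: x₁ ++ (w₁ ++ α) := prefix_congr_left x₁ h1
        have h3 : b ++ (x₁ ++ t₂) <+: b ++ (x₁ ++ (w₁ ++ α)) := prefix_congr_left b h2
        rw [show (b ++ x₁) ++ (w₁ ++ α) = b ++ (x₁ ++ (w₁ ++ α)) by simp [List.append_assoc]]
        exact h3

/-- Every short prefix of a word of `B_{i+2}` is a prefix of a word of `A_{i+2}`. -/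
lemma PBA (i : ℕ) {b : Word} (hb : b ∈ Bset (i+2)) {t : Word} (ht : t <+: b)
    (hlen : t.length + 1 ≤ Nat.fib (2*i+2)) : ∃ w ∈ Aset (i+2), t <+: w := by
  rcases memB_elim hb with ⟨u, hu, b', hb', rfl⟩ | ⟨b₀, hb₀, u, hu, rfl⟩
  · have hlu := lenA hu
    have hpre : t <+: u := by
      apply List.prefix_of_prefix_length_le ht (List.prefix_append u b')
      have h2 : Nat.fib (2*i+2) ≤ u.length := by rw [hlu]
      omega
    exact PAA i u hu t hpre hlen
  · obtain ⟨α, hα⟩ := exA i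
    refine ⟨b₀ ++ (u ++ α), memA_intro hb₀ hu hα, ?_⟩
    refine ht.trans ⟨α, by simp [List.append_assoc]⟩

/-- The hard window `A A A`. -/
lemma win_AAA {j : ℕ} {u y z s t : Word} (hu : u ∈ Aset (j+1)) (hy : y ∈ Aset (j+1))
    (hz : z ∈ Aset (j+1)) (hs : s <:+ u) (ht : t <+: z) (hs0 : s ≠ []) (ht0 : t ≠ [])
    (hlen : s.length + t.length = Nat.fib (2*j+2)) :
    ∃ c ∈ Aset (j+3), s ++ (y ++ t) <:+: c := by
  match j with
  | 0 =>
    exfalso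
    have h1 := List.length_pos_iff.mpr hs0
    have h2 := List.length_pos_iff.mpr ht0
    have : Nat.fib (2*0+2) = 1 := rfl
    omega
  | (i+1) =>
    obtain ⟨bu, hbu, u1, hu1, u2, hu2, rfl⟩ := memA_elim hu
    obtain ⟨bz, hbz, z1, hz1, z2, hz2, rfl⟩ := memA_elim hz
    have hl2 := lenA hu2
    have hlbz := lenB hbz
    have hlz1 := lenA hz1
    have e4 : Nat.fib (2*i+4) = Nat.fib (2*i+2) + Nat.fib (2*i+3) := fib_ss (2*i+2)
    have e3 : Nat.fib (2*i+3) = Nat.fib (2*i+1) + Nat.fib (2*i+2) := fib_ss (2*i+1)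
    have hlen' : s.length + t.length = Nat.fib (2*i+4) := by
      rwa [show 2*(i+1)+2 = 2*i+4 by ring] at hlen
    obtain ⟨β₂, hβ₂⟩ := exB (i+2)
    obtain ⟨α₂, hα₂⟩ := exA (i+2)
    rcases le_or_gt s.length (Nat.fib (2*i+2)) with hle | hlt
    · -- s is a suffix of u2; embed at positions [B][A][A] with B := β ++ u2
      have hu2suf : u2 <:+ bu ++ (u1 ++ u2) := ⟨bu ++ u1, by simp [List.append_assoc]⟩
      have hs2 : s <:+ u2 := suffix_of_suffix_length_le hs hu2suf (by omega)
      obtain ⟨β, hβ⟩ := exB i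
      have hb6 : β ++ u2 ∈ Bset (i+2) := memB_ba hβ hu2
      have hA2 : (β ++ u2) ++ (y ++ (bz ++ (z1 ++ z2))) ∈ Aset (i+3) :=
        memA_intro hb6 hy (memA_intro hbz hz1 hz2)
      refine ⟨β₂ ++ (((β ++ u2) ++ (y ++ (bz ++ (z1 ++ z2)))) ++ α₂),
        memA_intro hβ₂ hA2 hα₂, ?_⟩
      have hstr : s ++ (y ++ t) <:+: (β ++ u2) ++ (y ++ (bz ++ (z1 ++ z2))) :=
        straddle_mid (suffix_ext β hs2) ht
      exact hstr.trans ⟨β₂, α₂, by simp [List.append_assoc]⟩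
    · -- t is a prefix of bz ++ z1; embed at positions [A][A][B]
      have hbz1 : bz ++ z1 <+: bz ++ (z1 ++ z2) := by
        refine ⟨z2, by simp [List.append_assoc]⟩
      have htp : t <+: bz ++ z1 := by
        apply List.prefix_of_prefix_length_le ht hbz1
        simp only [List.length_append]
        omega
      have hb' : bz ++ z1 ∈ Bset (i+2) := memB_ba hbz hz1
      obtain ⟨β, hβ⟩ := exB (i+1)
      obtain ⟨α, hα⟩ := exA (i+1)
      have hA2a : β ++ ((bu ++ (u1 ++ u2)) ++ y) ∈ Aset (i+3) :=
        memA_intro hβ hu hy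
      have hA2b : (bz ++ z1) ++ (α ++ α) ∈ Aset (i+3) :=
        memA_intro hb' hα hα
      refine ⟨β₂ ++ ((β ++ ((bu ++ (u1 ++ u2)) ++ y)) ++ ((bz ++ z1) ++ (α ++ α))),
        memA_intro hβ₂ hA2a hA2b, ?_⟩
      have hstr : s ++ (y ++ t) <:+: (bu ++ (u1 ++ u2)) ++ (y ++ (bz ++ z1)) :=
        straddle_mid hs htp
      refine hstr.trans ⟨β₂ ++ β, α ++ α, by simp [List.append_assoc]⟩

end FibProof

namespace FibProof
open Letter List

section Win4
variable {j : ℕ} {u y s t b1 b2 b3 : Word}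

/-- Window `A A B B`: `s` a suffix of an `A`-word, then full `A`, full `B`, and a short
prefix of a `B`-word. -/
lemma win_AABB (hu : u ∈ Aset (j+1)) (hy : y ∈ Aset (j+1)) (hb1 : b1 ∈ Bset (j+1))
    (hb2 : b2 ∈ Bset (j+1)) (hs : s <:+ u) (ht : t <+: b2) (hs0 : s ≠ []) (ht0 : t ≠ [])
    (hlen : s.length + t.length = Nat.fib (2*j)) :
    ∃ c ∈ Aset (j+3), s ++ (y ++ (b1 ++ t)) <:+: c := by
  match j with
  | 0 =>
    exfalso
    have h1 := List.length_pos_iff.mpr hs0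
    have h2 : Nat.fib (2*0) = 0 := rfl
    omega
  | (i+1) =>
    have hs1 := List.length_pos_iff.mpr hs0
    have hlen' : s.length + t.length = Nat.fib (2*i+2) := by
      rwa [show 2*(i+1) = 2*i+2 by ring] at hlen
    obtain ⟨w, hw, hpw⟩ := PBA i hb2 ht (by omega)
    obtain ⟨c, hc, hinf⟩ := inf_AABA hu hy hb1 hw
    refine ⟨c, hc, ?_⟩
    have hstr : s ++ ((y ++ b1) ++ t) <:+: u ++ ((y ++ b1) ++ w) := straddle_mid hs hpw
    rw [show s ++ (y ++ (b1 ++ t)) = s ++ ((y ++ b1) ++ t) by simp [List.append_assoc]]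
    refine hstr.trans ?_
    rw [show u ++ ((y ++ b1) ++ w) = u ++ (y ++ (b1 ++ w)) by simp [List.append_assoc]]
    exact hinf

/-- Window `A B A B`. -/
lemma win_ABAB (hu : u ∈ Aset (j+1)) (hb1 : b1 ∈ Bset (j+1)) (hy : y ∈ Aset (j+1))
    (hb2 : b2 ∈ Bset (j+1)) (hs : s <:+ u) (ht : t <+: b2) (hs0 : s ≠ []) (ht0 : t ≠ [])
    (hlen : s.length + t.length = Nat.fib (2*j)) :
    ∃ c ∈ Aset (j+3), s ++ (b1 ++ (y ++ t)) <:+: c := by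
  match j with
  | 0 =>
    exfalso
    have h1 := List.length_pos_iff.mpr hs0
    have h2 : Nat.fib (2*0) = 0 := rfl
    omega
  | (i+1) =>
    have hs1 := List.length_pos_iff.mpr hs0
    have hlen' : s.length + t.length = Nat.fib (2*i+2) := by
      rwa [show 2*(i+1) = 2*i+2 by ring] at hlen
    obtain ⟨w, hw, hpw⟩ := PBA i hb2 ht (by omega)
    obtain ⟨c, hc, hinf⟩ := inf_ABAA hu hb1 hy hw
    refine ⟨c, hc, ?_⟩
    have hstr : s ++ ((b1 ++ y) ++ t) <:+: u ++ ((b1 ++ y) ++ w) := straddle_mid hs hpw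
    rw [show s ++ (b1 ++ (y ++ t)) = s ++ ((b1 ++ y) ++ t) by simp [List.append_assoc]]
    refine hstr.trans ?_
    rw [show u ++ ((b1 ++ y) ++ w) = u ++ (b1 ++ (y ++ w)) by simp [List.append_assoc]]
    exact hinf

/-- Window `B A B B`. -/
lemma win_BABB (hb1 : b1 ∈ Bset (j+1)) (hy : y ∈ Aset (j+1)) (hb2 : b2 ∈ Bset (j+1))
    (hb3 : b3 ∈ Bset (j+1)) (hs : s <:+ b1) (ht : t <+: b3) (hs0 : s ≠ []) (ht0 : t ≠ [])
    (hlen : s.length + t.length = Nat.fib (2*j)) :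
    ∃ c ∈ Aset (j+3), s ++ (y ++ (b2 ++ t)) <:+: c := by
  match j with
  | 0 =>
    exfalso
    have h1 := List.length_pos_iff.mpr hs0
    have h2 : Nat.fib (2*0) = 0 := rfl
    omega
  | (i+1) =>
    have hs1 := List.length_pos_iff.mpr hs0
    have hlen' : s.length + t.length = Nat.fib (2*i+2) := by
      rwa [show 2*(i+1) = 2*i+2 by ring] at hlen
    obtain ⟨w, hw, hpw⟩ := PBA i hb3 ht (by omega)
    obtain ⟨c, hc, hinf⟩ := inf_BABA hb1 hy hb2 hw
    refine ⟨c, hc, ?_⟩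
    have hstr : s ++ ((y ++ b2) ++ t) <:+: b1 ++ ((y ++ b2) ++ w) := straddle_mid hs hpw
    rw [show s ++ (y ++ (b2 ++ t)) = s ++ ((y ++ b2) ++ t) by simp [List.append_assoc]]
    refine hstr.trans ?_
    rw [show b1 ++ ((y ++ b2) ++ w) = b1 ++ (y ++ (b2 ++ w)) by simp [List.append_assoc]]
    exact hinf

/-- Window `B B A B`. -/
lemma win_BBAB (hb1 : b1 ∈ Bset (j+1)) (hb2 : b2 ∈ Bset (j+1)) (hy : y ∈ Aset (j+1))
    (hb3 : b3 ∈ Bset (j+1)) (hs : s <:+ b1) (ht : t <+: b3) (hs0 : s ≠ []) (ht0 : t ≠ [])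
    (hlen : s.length + t.length = Nat.fib (2*j)) :
    ∃ c ∈ Aset (j+3), s ++ (b2 ++ (y ++ t)) <:+: c := by
  match j with
  | 0 =>
    exfalso
    have h1 := List.length_pos_iff.mpr hs0
    have h2 : Nat.fib (2*0) = 0 := rfl
    omega
  | (i+1) =>
    have hs1 := List.length_pos_iff.mpr hs0
    have hlen' : s.length + t.length = Nat.fib (2*i+2) := by
      rwa [show 2*(i+1) = 2*i+2 by ring] at hlen
    obtain ⟨w, hw, hpw⟩ := PBA i hb3 ht (by omega)
    obtain ⟨c, hc, hinf⟩ := inf_BBAA hb1 hb2 hy hw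
    refine ⟨c, hc, ?_⟩
    have hstr : s ++ ((b2 ++ y) ++ t) <:+: b1 ++ ((b2 ++ y) ++ w) := straddle_mid hs hpw
    rw [show s ++ (b2 ++ (y ++ t)) = s ++ ((b2 ++ y) ++ t) by simp [List.append_assoc]]
    refine hstr.trans ?_
    rw [show b1 ++ ((b2 ++ y) ++ w) = b1 ++ (b2 ++ (y ++ w)) by simp [List.append_assoc]]
    exact hinf

end Win4
end FibProof

namespace FibProof
open Letter List

/-- Tilings of a word by level-`j+1` syllables `BAA`, `AB`, `BA` (blocks at level `j+1`). -/
inductive STil (j : ℕ) : List Word → Prop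
  | nil : STil j []
  | baa {b x y : Word} {L : List Word} : b ∈ Bset (j+1) → x ∈ Aset (j+1) → y ∈ Aset (j+1) →
      STil j L → STil j (b :: x :: y :: L)
  | ab {x b : Word} {L : List Word} : x ∈ Aset (j+1) → b ∈ Bset (j+1) →
      STil j L → STil j (x :: b :: L)
  | ba {b x : Word} {L : List Word} : b ∈ Bset (j+1) → x ∈ Aset (j+1) →
      STil j L → STil j (b :: x :: L)

lemma STil.append {j : ℕ} {L₁ L₂ : List Word} (h1 : STil j L₁) (h2 : STil j L₂) :
    STil j (L₁ ++ L₂) := by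
  induction h1 with
  | nil => exact h2
  | baa hb hx hy _ ih => exact .baa hb hx hy ih
  | ab hx hb _ ih => exact .ab hx hb ih
  | ba hb hx _ ih => exact .ba hb hx ih

lemma tiling (j : ℕ) : ∀ k : ℕ, j+2 ≤ k →
    (∀ w ∈ Aset k, ∃ L, STil j L ∧ w = L.flatten) ∧
    (∀ w ∈ Bset k, ∃ L, STil j L ∧ w = L.flatten) := by
  intro k hk
  induction k, hk using Nat.le_induction with
  | base =>
    constructor
    · intro w hw
      obtain ⟨b, hb, x, hx, y, hy, rfl⟩ := memA_elim hw
      exact ⟨[b, x, y], .baa hb hx hy .nil, by simp⟩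
    · intro w hw
      rcases memB_elim hw with ⟨x, hx, b, hb, rfl⟩ | ⟨b, hb, x, hx, rfl⟩
      · exact ⟨[x, b], .ab hx hb .nil, by simp⟩
      · exact ⟨[b, x], .ba hb hx .nil, by simp⟩
  | succ k hk ih =>
    obtain ⟨ihA, ihB⟩ := ih
    obtain ⟨m, rfl⟩ : ∃ m, k = m + 1 := ⟨k - 1, by omega⟩
    constructor
    · intro w hw
      obtain ⟨b, hb, x, hx, y, hy, rfl⟩ := memA_elim hw
      obtain ⟨Lb, hLb, rfl⟩ := ihB b hb
      obtain ⟨Lx, hLx, rfl⟩ := ihA x hx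
      obtain ⟨Ly, hLy, rfl⟩ := ihA y hy
      exact ⟨Lb ++ (Lx ++ Ly), hLb.append (hLx.append hLy), by simp⟩
    · intro w hw
      rcases memB_elim hw with ⟨x, hx, b, hb, rfl⟩ | ⟨b, hb, x, hx, rfl⟩
      · obtain ⟨Lx, hLx, rfl⟩ := ihA x hx
        obtain ⟨Lb, hLb, rfl⟩ := ihB b hb
        exact ⟨Lx ++ Lb, hLx.append hLb, by simp⟩
      · obtain ⟨Lb, hLb, rfl⟩ := ihB b hb
        obtain ⟨Lx, hLx, rfl⟩ := ihA x hx
        exact ⟨Lb ++ Lx, hLb.append hLx, by simp⟩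

lemma straddle_mid2 {s t u v m1 m2 : Word} (hs : s <:+ u) (ht : t <+: v) :
    s ++ (m1 ++ (m2 ++ t)) <:+: u ++ (m1 ++ (m2 ++ v)) := by
  obtain ⟨a, rfl⟩ := hs
  obtain ⟨d, rfl⟩ := ht
  exact ⟨a, d, by simp [List.append_assoc]⟩

lemma fibPQ (j : ℕ) : Nat.fib (2*j+1) ≤ Nat.fib (2*j+2) ∧
    Nat.fib (2*j+2) ≤ 2 * Nat.fib (2*j+1) ∧ 1 ≤ Nat.fib (2*j+1) ∧
    Nat.fib (2*j+2) = Nat.fib (2*j) + Nat.fib (2*j+1) := by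
  refine ⟨Nat.fib_mono (by omega), ?_, ?_, fib_ss (2*j)⟩
  · have h := fib_ss (2*j)
    have := Nat.fib_mono (show 2*j ≤ 2*j+1 by omega)
    omega
  · exact Nat.fib_pos.mpr (by omega)

end FibProof

namespace FibProof
open Letter List

set_option maxHeartbeats 1000000 in
/-- Straddle starting in the final `A`-block of a syllable, continuing into a tiling. -/
lemma stepA {j : ℕ} {y s t : Word} {L : List Word} (hy : y ∈ Aset (j+1)) (hs : s <:+ y)
    (hs0 : s ≠ []) (hL : STil j L) (ht : t <+: L.flatten)
    (hlen : s.length + t.length = 2 * Nat.fib (2*j+2)) :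
    ∃ c ∈ Aset (j+3), s ++ t <:+: c := by
  obtain ⟨hQP, hP2Q, hQ1, heP⟩ := fibPQ j
  have hs1 : 1 ≤ s.length := List.length_pos_iff.mpr hs0
  have hsy : s.length ≤ y.length := hs.length_le
  have hly := lenA hy
  cases hL with
  | nil =>
    exfalso
    have ht' : t = [] := List.prefix_nil.mp (by simpa using ht)
    subst ht'
    simp only [List.length_nil] at hlen
    omega
  | @baa b xb yb L' hb hxb hyb hL' =>
    simp only [List.flatten_cons] at ht
    have hlb := lenB hb
    have hlxb := lenA hxb
    have hlyb := lenA hyb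
    rcases prefix_split ht with htb | ⟨t₁, rfl, ht₁⟩
    · obtain ⟨c, hc, hi⟩ := inf_AB hy hb
      exact ⟨c, hc, (straddle_pair hs htb).trans hi⟩
    · rcases prefix_split ht₁ with htx | ⟨t₂, rfl, ht₂⟩
      · obtain ⟨c, hc, hi⟩ := inf_ABA hy hb hxb
        exact ⟨c, hc, (straddle_mid hs htx).trans hi⟩
      · rcases prefix_split ht₂ with hty | ⟨t₃, rfl, ht₃⟩
        · obtain ⟨c, hc, hi⟩ := inf_ABAA hy hb hxb hyb
          exact ⟨c, hc, (straddle_mid2 hs hty).trans hi⟩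
        · exfalso
          simp only [List.length_append] at hlen
          omega
  | @ab xb b L' hxb hb hL' =>
    simp only [List.flatten_cons] at ht
    have hlb := lenB hb
    have hlxb := lenA hxb
    rcases prefix_split ht with htx | ⟨t₁, rfl, ht₁⟩
    · obtain ⟨c, hc, hi⟩ := inf_AA hy hxb
      exact ⟨c, hc, (straddle_pair hs htx).trans hi⟩
    · rcases prefix_split ht₁ with htb | ⟨t₂, rfl, ht₂⟩
      · obtain ⟨c, hc, hi⟩ := inf_AAB hy hxb hb
        exact ⟨c, hc, (straddle_mid hs htb).trans hi⟩
      · by_cases h0 : t₂ = []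
        · subst h0
          simp only [List.append_nil]
          obtain ⟨c, hc, hi⟩ := inf_AAB hy hxb hb
          exact ⟨c, hc, (straddle_mid hs List.prefix_rfl).trans hi⟩
        · cases hL' with
          | nil => exact absurd (List.prefix_nil.mp (by simpa using ht₂)) h0
          | @baa b' x' y' L'' hb' hx' hy' hL'' =>
            simp only [List.flatten_cons] at ht₂
            have hlb' := lenB hb'
            rcases prefix_split ht₂ with ht₂b | ⟨t₃, rfl, ht₃⟩
            · have hx2 : s.length + t₂.length = Nat.fib (2*j) := by
                simp only [List.length_append] at hlen; omega
              exact win_AABB hy hxb hb hb' hs ht₂b hs0 h0 hx2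
            · exfalso; simp only [List.length_append] at hlen; omega
          | @ab x' b' L'' hx' hb' hL'' =>
            simp only [List.flatten_cons] at ht₂
            have hlx' := lenA hx'
            rcases prefix_split ht₂ with ht₂x | ⟨t₃, rfl, ht₃⟩
            · obtain ⟨c, hc, hi⟩ := inf_AABA hy hxb hb hx'
              exact ⟨c, hc, (straddle_mid2 hs ht₂x).trans hi⟩
            · exfalso; simp only [List.length_append] at hlen; omega
          | @ba b' x' L'' hb' hx' hL'' =>
            simp only [List.flatten_cons] at ht₂
            have hlb' := lenB hb'
            rcases prefix_split ht₂ with ht₂b | ⟨t₃, rfl, ht₃⟩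
            · have hx2 : s.length + t₂.length = Nat.fib (2*j) := by
                simp only [List.length_append] at hlen; omega
              exact win_AABB hy hxb hb hb' hs ht₂b hs0 h0 hx2
            · exfalso; simp only [List.length_append] at hlen; omega
  | @ba b xb L' hb hxb hL' =>
    simp only [List.flatten_cons] at ht
    have hlb := lenB hb
    have hlxb := lenA hxb
    rcases prefix_split ht with htb | ⟨t₁, rfl, ht₁⟩
    · obtain ⟨c, hc, hi⟩ := inf_AB hy hb
      exact ⟨c, hc, (straddle_pair hs htb).trans hi⟩
    · rcases prefix_split ht₁ with htx | ⟨t₂, rfl, ht₂⟩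
      · obtain ⟨c, hc, hi⟩ := inf_ABA hy hb hxb
        exact ⟨c, hc, (straddle_mid hs htx).trans hi⟩
      · by_cases h0 : t₂ = []
        · subst h0
          simp only [List.append_nil]
          obtain ⟨c, hc, hi⟩ := inf_ABA hy hb hxb
          exact ⟨c, hc, (straddle_mid hs List.prefix_rfl).trans hi⟩
        · cases hL' with
          | nil => exact absurd (List.prefix_nil.mp (by simpa using ht₂)) h0
          | @baa b' x' y' L'' hb' hx' hy' hL'' =>
            simp only [List.flatten_cons] at ht₂
            have hlb' := lenB hb'
            rcases prefix_split ht₂ with ht₂b | ⟨t₃, rfl, ht₃⟩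
            · have hx2 : s.length + t₂.length = Nat.fib (2*j) := by
                simp only [List.length_append] at hlen; omega
              exact win_ABAB hy hb hxb hb' hs ht₂b hs0 h0 hx2
            · exfalso; simp only [List.length_append] at hlen; omega
          | @ab x' b' L'' hx' hb' hL'' =>
            simp only [List.flatten_cons] at ht₂
            have hlx' := lenA hx'
            rcases prefix_split ht₂ with ht₂x | ⟨t₃, rfl, ht₃⟩
            · obtain ⟨c, hc, hi⟩ := inf_ABAA hy hb hxb hx'
              exact ⟨c, hc, (straddle_mid2 hs ht₂x).trans hi⟩
            · exfalso; simp only [List.length_append] at hlen; omega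
          | @ba b' x' L'' hb' hx' hL'' =>
            simp only [List.flatten_cons] at ht₂
            have hlb' := lenB hb'
            rcases prefix_split ht₂ with ht₂b | ⟨t₃, rfl, ht₃⟩
            · have hx2 : s.length + t₂.length = Nat.fib (2*j) := by
                simp only [List.length_append] at hlen; omega
              exact win_ABAB hy hb hxb hb' hs ht₂b hs0 h0 hx2
            · exfalso; simp only [List.length_append] at hlen; omega

set_option maxHeartbeats 1000000 in
/-- Straddle starting in the final `B`-block of an `AB`-syllable, continuing into a tiling. -/
lemma stepB {j : ℕ} {bh s t : Word} {L : List Word} (hbh : bh ∈ Bset (j+1)) (hs : s <:+ bh)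
    (hs0 : s ≠ []) (hL : STil j L) (ht : t <+: L.flatten)
    (hlen : s.length + t.length = 2 * Nat.fib (2*j+2)) :
    ∃ c ∈ Aset (j+3), s ++ t <:+: c := by
  obtain ⟨hQP, hP2Q, hQ1, heP⟩ := fibPQ j
  have hs1 : 1 ≤ s.length := List.length_pos_iff.mpr hs0
  have hsy : s.length ≤ bh.length := hs.length_le
  have hly := lenB hbh
  cases hL with
  | nil =>
    exfalso
    have ht' : t = [] := List.prefix_nil.mp (by simpa using ht)
    subst ht'
    simp only [List.length_nil] at hlen
    omega
  | @baa b' x' y' L' hb' hx' hy' hL' =>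
    simp only [List.flatten_cons] at ht
    have l1 := lenB hb'; have l2 := lenA hx'; have l3 := lenA hy'
    rcases prefix_split ht with h1 | ⟨t₁, rfl, ht₁⟩
    · obtain ⟨c, hc, hi⟩ := inf_BB hbh hb'
      exact ⟨c, hc, (straddle_pair hs h1).trans hi⟩
    · rcases prefix_split ht₁ with h2 | ⟨t₂, rfl, ht₂⟩
      · obtain ⟨c, hc, hi⟩ := inf_BBA hbh hb' hx'
        exact ⟨c, hc, (straddle_mid hs h2).trans hi⟩
      · rcases prefix_split ht₂ with h3 | ⟨t₃, rfl, ht₃⟩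
        · obtain ⟨c, hc, hi⟩ := inf_BBAA hbh hb' hx' hy'
          exact ⟨c, hc, (straddle_mid2 hs h3).trans hi⟩
        · exfalso; simp only [List.length_append] at hlen; omega
  | @ab x' b' L' hx' hb' hL' =>
    simp only [List.flatten_cons] at ht
    have l2 := lenA hx'; have l1 := lenB hb'
    rcases prefix_split ht with h1 | ⟨t₁, rfl, ht₁⟩
    · obtain ⟨c, hc, hi⟩ := inf_BA hbh hx'
      exact ⟨c, hc, (straddle_pair hs h1).trans hi⟩
    · rcases prefix_split ht₁ with h2 | ⟨t₂, rfl, ht₂⟩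
      · obtain ⟨c, hc, hi⟩ := inf_BAB hbh hx' hb'
        exact ⟨c, hc, (straddle_mid hs h2).trans hi⟩
      · by_cases h0 : t₂ = []
        · subst h0
          simp only [List.append_nil]
          obtain ⟨c, hc, hi⟩ := inf_BAB hbh hx' hb'
          exact ⟨c, hc, (straddle_mid hs List.prefix_rfl).trans hi⟩
        · cases hL' with
          | nil => exact absurd (List.prefix_nil.mp (by simpa using ht₂)) h0
          | @baa b'' x'' y'' L'' hb'' hx'' hy'' hL'' =>
            simp only [List.flatten_cons] at ht₂
            have l4 := lenB hb''
            rcases prefix_split ht₂ with h3 | ⟨t₃, rfl, ht₃⟩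
            · have hx2 : s.length + t₂.length = Nat.fib (2*j) := by
                simp only [List.length_append] at hlen; omega
              exact win_BABB hbh hx' hb' hb'' hs h3 hs0 h0 hx2
            · exfalso; simp only [List.length_append] at hlen; omega
          | @ab x'' b'' L'' hx'' hb'' hL'' =>
            simp only [List.flatten_cons] at ht₂
            have l4 := lenA hx''
            rcases prefix_split ht₂ with h3 | ⟨t₃, rfl, ht₃⟩
            · obtain ⟨c, hc, hi⟩ := inf_BABA hbh hx' hb' hx''
              exact ⟨c, hc, (straddle_mid2 hs h3).trans hi⟩
            · exfalso; simp only [List.length_append] at hlen; omega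
          | @ba b'' x'' L'' hb'' hx'' hL'' =>
            simp only [List.flatten_cons] at ht₂
            have l4 := lenB hb''
            rcases prefix_split ht₂ with h3 | ⟨t₃, rfl, ht₃⟩
            · have hx2 : s.length + t₂.length = Nat.fib (2*j) := by
                simp only [List.length_append] at hlen; omega
              exact win_BABB hbh hx' hb' hb'' hs h3 hs0 h0 hx2
            · exfalso; simp only [List.length_append] at hlen; omega
  | @ba b' x' L' hb' hx' hL' =>
    simp only [List.flatten_cons] at ht
    have l1 := lenB hb'; have l2 := lenA hx'
    rcases prefix_split ht with h1 | ⟨t₁, rfl, ht₁⟩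
    · obtain ⟨c, hc, hi⟩ := inf_BB hbh hb'
      exact ⟨c, hc, (straddle_pair hs h1).trans hi⟩
    · rcases prefix_split ht₁ with h2 | ⟨t₂, rfl, ht₂⟩
      · obtain ⟨c, hc, hi⟩ := inf_BBA hbh hb' hx'
        exact ⟨c, hc, (straddle_mid hs h2).trans hi⟩
      · by_cases h0 : t₂ = []
        · subst h0
          simp only [List.append_nil]
          obtain ⟨c, hc, hi⟩ := inf_BBA hbh hb' hx'
          exact ⟨c, hc, (straddle_mid hs List.prefix_rfl).trans hi⟩
        · cases hL' with
          | nil => exact absurd (List.prefix_nil.mp (by simpa using ht₂)) h0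
          | @baa b'' x'' y'' L'' hb'' hx'' hy'' hL'' =>
            simp only [List.flatten_cons] at ht₂
            have l4 := lenB hb''
            rcases prefix_split ht₂ with h3 | ⟨t₃, rfl, ht₃⟩
            · have hx2 : s.length + t₂.length = Nat.fib (2*j) := by
                simp only [List.length_append] at hlen; omega
              exact win_BBAB hbh hb' hx' hb'' hs h3 hs0 h0 hx2
            · exfalso; simp only [List.length_append] at hlen; omega
          | @ab x'' b'' L'' hx'' hb'' hL'' =>
            simp only [List.flatten_cons] at ht₂
            have l4 := lenA hx''
            rcases prefix_split ht₂ with h3 | ⟨t₃, rfl, ht₃⟩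
            · obtain ⟨c, hc, hi⟩ := inf_BBAA hbh hb' hx' hx''
              exact ⟨c, hc, (straddle_mid2 hs h3).trans hi⟩
            · exfalso; simp only [List.length_append] at hlen; omega
          | @ba b'' x'' L'' hb'' hx'' hL'' =>
            simp only [List.flatten_cons] at ht₂
            have l4 := lenB hb''
            rcases prefix_split ht₂ with h3 | ⟨t₃, rfl, ht₃⟩
            · have hx2 : s.length + t₂.length = Nat.fib (2*j) := by
                simp only [List.length_append] at hlen; omega
              exact win_BBAB hbh hb' hx' hb'' hs h3 hs0 h0 hx2
            · exfalso; simp only [List.length_append] at hlen; omega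

end FibProof

namespace FibProof
open Letter List

set_option maxHeartbeats 1600000 in
/-- Any factor of length `2 fib(2j+2)` of a tiled word is a factor of a word of `A_{j+3}`. -/
lemma master {j : ℕ} {L : List Word} (hL : STil j L) : ∀ {x : Word},
    x.length = 2 * Nat.fib (2*j+2) → x <:+: L.flatten →
    ∃ c ∈ Aset (j+3), x <:+: c := by
  obtain ⟨hQP, hP2Q, hQ1, heP⟩ := fibPQ j
  induction hL with
  | nil =>
    intro x hlx hinf
    exfalso
    have : x = [] := by
      have h := hinf.length_le
      simp only [List.flatten_nil, List.length_nil] at h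
      exact List.length_eq_zero_iff.mp (by omega)
    subst this
    simp only [List.length_nil] at hlx
    omega
  | @baa b xm ym L' hb hxm hym hL' ih =>
    intro x hlx hinf
    simp only [List.flatten_cons] at hinf
    have hlb := lenB hb
    have hlxm := lenA hxm
    have hlym := lenA hym
    rcases infix_split hinf with h1 | h2 | ⟨s, t, rfl, hs, ht, hs0, ht0⟩
    · exfalso; have := h1.length_le; omega
    · rcases infix_split h2 with h21 | h22 | ⟨s, t, rfl, hs, ht, hs0, ht0⟩
      · exfalso; have := h21.length_le; omega
      · rcases infix_split h22 with h221 | h222 | ⟨s, t, rfl, hs, ht, hs0, ht0⟩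
        · exfalso; have := h221.length_le; omega
        · exact ih hlx h222
        · -- straddle from ym into L'
          exact stepA hym hs hs0 hL' ht (by simpa using hlx)
      · -- straddle s <:+ xm, t <+: ym ++ flatten L'
        rcases prefix_split ht with hty | ⟨t₁, rfl, ht₁⟩
        · obtain ⟨c, hc, hi⟩ := inf_AA hxm hym
          exact ⟨c, hc, (straddle_pair hs hty).trans hi⟩
        · by_cases h0 : t₁ = []
          · subst h0
            simp only [List.append_nil]
            obtain ⟨c, hc, hi⟩ := inf_AA hxm hym
            exact ⟨c, hc, (straddle_pair hs List.prefix_rfl).trans hi⟩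
          · cases hL' with
            | nil => exact absurd (List.prefix_nil.mp (by simpa using ht₁)) h0
            | @baa b' x' y' L'' hb' hx' hy' hL'' =>
              simp only [List.flatten_cons] at ht₁
              have hlb' := lenB hb'
              rcases prefix_split ht₁ with ht₁b | ⟨t₂, rfl, ht₂⟩
              · obtain ⟨c, hc, hi⟩ := inf_AAB hxm hym hb'
                exact ⟨c, hc, (straddle_mid hs ht₁b).trans hi⟩
              · rcases prefix_split ht₂ with ht₂x | ⟨t₃, rfl, ht₃⟩
                · obtain ⟨c, hc, hi⟩ := inf_AABA hxm hym hb' hx'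
                  exact ⟨c, hc, (straddle_mid2 hs ht₂x).trans hi⟩
                · exfalso
                  have hlx' := lenA hx'
                  have hs1 := List.length_pos_iff.mpr hs0
                  simp only [List.length_append] at hlx
                  omega
            | @ab x' b' L'' hx' hb' hL'' =>
              simp only [List.flatten_cons] at ht₁
              have hlx' := lenA hx'
              rcases prefix_split ht₁ with ht₁x | ⟨t₂, rfl, ht₂⟩
              · -- the hard window A A A
                have hx2 : s.length + t₁.length = Nat.fib (2*j+2) := by
                  simp only [List.length_append] at hlx; omega
                exact win_AAA hxm hym hx' hs ht₁x hs0 h0 hx2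
              · exfalso
                have hs1 := List.length_pos_iff.mpr hs0
                simp only [List.length_append] at hlx
                omega
            | @ba b' x' L'' hb' hx' hL'' =>
              simp only [List.flatten_cons] at ht₁
              have hlb' := lenB hb'
              rcases prefix_split ht₁ with ht₁b | ⟨t₂, rfl, ht₂⟩
              · obtain ⟨c, hc, hi⟩ := inf_AAB hxm hym hb'
                exact ⟨c, hc, (straddle_mid hs ht₁b).trans hi⟩
              · rcases prefix_split ht₂ with ht₂x | ⟨t₃, rfl, ht₃⟩
                · obtain ⟨c, hc, hi⟩ := inf_AABA hxm hym hb' hx'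
                  exact ⟨c, hc, (straddle_mid2 hs ht₂x).trans hi⟩
                · exfalso
                  have hlx' := lenA hx'
                  have hs1 := List.length_pos_iff.mpr hs0
                  simp only [List.length_append] at hlx
                  omega
    · -- straddle s <:+ b, t <+: xm ++ (ym ++ flatten L')
      rcases prefix_split ht with htx | ⟨t₁, rfl, ht₁⟩
      · obtain ⟨c, hc, hi⟩ := inf_BA hb hxm
        exact ⟨c, hc, (straddle_pair hs htx).trans hi⟩
      · rcases prefix_split ht₁ with hty | ⟨t₂, rfl, ht₂⟩
        · obtain ⟨c, hc, hi⟩ := inf_BAA hb hxm hym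
          exact ⟨c, hc, (straddle_mid hs hty).trans hi⟩
        · exfalso
          have hsl : s.length ≤ b.length := hs.length_le
          have hs1 := List.length_pos_iff.mpr hs0
          simp only [List.length_append] at hlx
          omega
  | @ab xm bm L' hxm hbm hL' ih =>
    intro x hlx hinf
    simp only [List.flatten_cons] at hinf
    have hlbm := lenB hbm
    have hlxm := lenA hxm
    rcases infix_split hinf with h1 | h2 | ⟨s, t, rfl, hs, ht, hs0, ht0⟩
    · exfalso; have := h1.length_le; omega
    · rcases infix_split h2 with h21 | h22 | ⟨s, t, rfl, hs, ht, hs0, ht0⟩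
      · exfalso; have := h21.length_le; omega
      · exact ih hlx h22
      · exact stepB hbm hs hs0 hL' ht (by simpa using hlx)
    · -- straddle s <:+ xm, t <+: bm ++ flatten L'
      rcases prefix_split ht with htb | ⟨t₁, rfl, ht₁⟩
      · obtain ⟨c, hc, hi⟩ := inf_AB hxm hbm
        exact ⟨c, hc, (straddle_pair hs htb).trans hi⟩
      · by_cases h0 : t₁ = []
        · subst h0
          simp only [List.append_nil]
          obtain ⟨c, hc, hi⟩ := inf_AB hxm hbm
          exact ⟨c, hc, (straddle_pair hs List.prefix_rfl).trans hi⟩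
        · cases hL' with
          | nil => exact absurd (List.prefix_nil.mp (by simpa using ht₁)) h0
          | @baa b' x' y' L'' hb' hx' hy' hL'' =>
            simp only [List.flatten_cons] at ht₁
            have hlb' := lenB hb'
            rcases prefix_split ht₁ with ht₁b | ⟨t₂, rfl, ht₂⟩
            · obtain ⟨c, hc, hi⟩ := inf_ABB hxm hbm hb'
              exact ⟨c, hc, (straddle_mid hs ht₁b).trans hi⟩
            · rcases prefix_split ht₂ with ht₂x | ⟨t₃, rfl, ht₃⟩
              · obtain ⟨c, hc, hi⟩ := inf_ABBA hxm hbm hb' hx'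
                exact ⟨c, hc, (straddle_mid2 hs ht₂x).trans hi⟩
              · exfalso
                have hlx' := lenA hx'
                have hs1 := List.length_pos_iff.mpr hs0
                simp only [List.length_append] at hlx
                omega
          | @ab x' b' L'' hx' hb' hL'' =>
            simp only [List.flatten_cons] at ht₁
            have hlx' := lenA hx'
            rcases prefix_split ht₁ with ht₁x | ⟨t₂, rfl, ht₂⟩
            · obtain ⟨c, hc, hi⟩ := inf_ABA hxm hbm hx'
              exact ⟨c, hc, (straddle_mid hs ht₁x).trans hi⟩
            · by_cases h20 : t₂ = []
              · subst h20
                simp only [List.append_nil]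
                obtain ⟨c, hc, hi⟩ := inf_ABA hxm hbm hx'
                exact ⟨c, hc, (straddle_mid hs List.prefix_rfl).trans hi⟩
              · have hlb' := lenB hb'
                rcases prefix_split ht₂ with ht₂b | ⟨t₃, rfl, ht₃⟩
                · have hx2 : s.length + t₂.length = Nat.fib (2*j) := by
                    simp only [List.length_append] at hlx; omega
                  exact win_ABAB hxm hbm hx' hb' hs ht₂b hs0 h20 hx2
                · exfalso
                  have hs1 := List.length_pos_iff.mpr hs0
                  simp only [List.length_append] at hlx
                  omega
          | @ba b' x' L'' hb' hx' hL'' =>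
            simp only [List.flatten_cons] at ht₁
            have hlb' := lenB hb'
            rcases prefix_split ht₁ with ht₁b | ⟨t₂, rfl, ht₂⟩
            · obtain ⟨c, hc, hi⟩ := inf_ABB hxm hbm hb'
              exact ⟨c, hc, (straddle_mid hs ht₁b).trans hi⟩
            · rcases prefix_split ht₂ with ht₂x | ⟨t₃, rfl, ht₃⟩
              · obtain ⟨c, hc, hi⟩ := inf_ABBA hxm hbm hb' hx'
                exact ⟨c, hc, (straddle_mid2 hs ht₂x).trans hi⟩
              · exfalso
                have hlx' := lenA hx'
                have hs1 := List.length_pos_iff.mpr hs0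
                simp only [List.length_append] at hlx
                omega
  | @ba bm xm L' hbm hxm hL' ih =>
    intro x hlx hinf
    simp only [List.flatten_cons] at hinf
    have hlbm := lenB hbm
    have hlxm := lenA hxm
    rcases infix_split hinf with h1 | h2 | ⟨s, t, rfl, hs, ht, hs0, ht0⟩
    · exfalso; have := h1.length_le; omega
    · rcases infix_split h2 with h21 | h22 | ⟨s, t, rfl, hs, ht, hs0, ht0⟩
      · exfalso; have := h21.length_le; omega
      · exact ih hlx h22
      · exact stepA hxm hs hs0 hL' ht (by simpa using hlx)
    · -- straddle s <:+ bm, t <+: xm ++ flatten L'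
      rcases prefix_split ht with htx | ⟨t₁, rfl, ht₁⟩
      · obtain ⟨c, hc, hi⟩ := inf_BA hbm hxm
        exact ⟨c, hc, (straddle_pair hs htx).trans hi⟩
      · by_cases h0 : t₁ = []
        · subst h0
          simp only [List.append_nil]
          obtain ⟨c, hc, hi⟩ := inf_BA hbm hxm
          exact ⟨c, hc, (straddle_pair hs List.prefix_rfl).trans hi⟩
        · cases hL' with
          | nil => exact absurd (List.prefix_nil.mp (by simpa using ht₁)) h0
          | @baa b' x' y' L'' hb' hx' hy' hL'' =>
            simp only [List.flatten_cons] at ht₁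
            have hlb' := lenB hb'
            rcases prefix_split ht₁ with ht₁b | ⟨t₂, rfl, ht₂⟩
            · obtain ⟨c, hc, hi⟩ := inf_BAB hbm hxm hb'
              exact ⟨c, hc, (straddle_mid hs ht₁b).trans hi⟩
            · rcases prefix_split ht₂ with ht₂x | ⟨t₃, rfl, ht₃⟩
              · obtain ⟨c, hc, hi⟩ := inf_BABA hbm hxm hb' hx'
                exact ⟨c, hc, (straddle_mid2 hs ht₂x).trans hi⟩
              · exfalso
                have hlx' := lenA hx'
                have hsl : s.length ≤ bm.length := hs.length_le
                have hs1 := List.length_pos_iff.mpr hs0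
                simp only [List.length_append] at hlx
                omega
          | @ab x' b' L'' hx' hb' hL'' =>
            simp only [List.flatten_cons] at ht₁
            have hlx' := lenA hx'
            rcases prefix_split ht₁ with ht₁x | ⟨t₂, rfl, ht₂⟩
            · obtain ⟨c, hc, hi⟩ := inf_BAA hbm hxm hx'
              exact ⟨c, hc, (straddle_mid hs ht₁x).trans hi⟩
            · exfalso
              have hsl : s.length ≤ bm.length := hs.length_le
              have hs1 := List.length_pos_iff.mpr hs0
              simp only [List.length_append] at hlx
              omega
          | @ba b' x' L'' hb' hx' hL'' =>
            simp only [List.flatten_cons] at ht₁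
            have hlb' := lenB hb'
            rcases prefix_split ht₁ with ht₁b | ⟨t₂, rfl, ht₂⟩
            · obtain ⟨c, hc, hi⟩ := inf_BAB hbm hxm hb'
              exact ⟨c, hc, (straddle_mid hs ht₁b).trans hi⟩
            · rcases prefix_split ht₂ with ht₂x | ⟨t₃, rfl, ht₃⟩
              · obtain ⟨c, hc, hi⟩ := inf_BABA hbm hxm hb' hx'
                exact ⟨c, hc, (straddle_mid2 hs ht₂x).trans hi⟩
              · exfalso
                have hlx' := lenA hx'
                have hsl : s.length ≤ bm.length := hs.length_le
                have hs1 := List.length_pos_iff.mpr hs0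
                simp only [List.length_append] at hlx
                omega

end FibProof

namespace FibProof
open Letter List

lemma factor_iff_infix {x w : Word} : IsFactor x w ↔ x <:+: w := by
  constructor
  · rintro ⟨u, v, rfl⟩; exact ⟨u, v, rfl⟩
  · rintro ⟨u, v, h⟩; exact ⟨u, v, h.symm⟩

lemma upward {k : ℕ} (hk : 1 ≤ k) (M : ℕ) :
    FactorSet (Aset k) M ⊆ FactorSet (Aset (k+1)) M := by
  rintro x ⟨hlx, w, hw, hf⟩
  obtain ⟨m, rfl⟩ : ∃ m, k = m + 1 := ⟨k - 1, by omega⟩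
  obtain ⟨β, hβ⟩ := exB m
  obtain ⟨α, hα⟩ := exA m
  refine ⟨hlx, β ++ (w ++ α), memA_intro hβ hw hα, ?_⟩
  obtain ⟨u, v, rfl⟩ := hf
  exact ⟨β ++ u, v ++ α, by simp [List.append_assoc]⟩

lemma up_chain (M : ℕ) : ∀ {k k' : ℕ}, 1 ≤ k → k ≤ k' →
    FactorSet (Aset k) M ⊆ FactorSet (Aset k') M := by
  intro k k' hk1 hkk
  induction k', hkk using Nat.le_induction with
  | base => exact subset_rfl
  | succ k'' hk'' ih => exact fun x hx => upward (by omega) M (ih hx)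

lemma downward {j k : ℕ} (hk : j + 2 ≤ k) :
    FactorSet (Aset k) (2 * Nat.fib (2*j+2)) ⊆
      FactorSet (Aset (j+3)) (2 * Nat.fib (2*j+2)) := by
  rintro x ⟨hlx, w, hw, hf⟩
  obtain ⟨L, hLt, rfl⟩ := (tiling j k hk).1 w hw
  obtain ⟨c, hc, hic⟩ := master hLt hlx (factor_iff_infix.mp hf)
  exact mem_FactorSet hc hic hlx

end FibProof

open FibProof in
theorem factors_Aset_eq_FA' (n : ℕ) (hn : 2 ≤ n) :
    FactorSet (Aset (n + 1)) (Nat.fib (2 * n) - Nat.fib (2 * n - 3)) =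
      FA (Nat.fib (2 * n) - Nat.fib (2 * n - 3)) := by
  obtain ⟨j, rfl⟩ : ∃ j, n = j + 2 := ⟨n - 2, by omega⟩
  have hM : Nat.fib (2 * (j+2)) - Nat.fib (2 * (j+2) - 3) = 2 * Nat.fib (2*j+2) := by
    have e4 : Nat.fib (2*j+4) = Nat.fib (2*j+2) + Nat.fib (2*j+3) := fib_ss (2*j+2)
    have e3 : Nat.fib (2*j+3) = Nat.fib (2*j+1) + Nat.fib (2*j+2) := fib_ss (2*j+1)
    have g1 : 2*(j+2) = 2*j+4 := by ring
    have g2 : 2*j+4 - 3 = 2*j+1 := by omega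
    rw [g1, g2]
    omega
  rw [hM]
  ext x
  constructor
  · intro hx
    exact Set.mem_biUnion (show (1:ℕ) ≤ j + 2 + 1 by omega) hx
  · intro hx
    simp only [FA, Set.mem_iUnion, Set.mem_setOf_eq] at hx
    obtain ⟨k, hk1, hxk⟩ := hx
    have h1 : x ∈ FactorSet (Aset (max k (j+2))) (2 * Nat.fib (2*j+2)) :=
      up_chain _ hk1 (le_max_left _ _) hxk
    exact downward (le_max_right _ _) h1

theorem factors_Aset_eq_FA (n : ℕ) (hn : 2 ≤ n) :
    FactorSet (Aset (n + 1)) (Nat.fib (2 * n) - Nat.fib (2 * n - 3)) =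
      FA (Nat.fib (2 * n) - Nat.fib (2 * n - 3)) :=
  factors_Aset_eq_FA' n hn
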